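/- Fix a constant q > 0 and let B_CC = {M | CC(M) ≤ q}. Then B_CC is a (⌊2^q⌋+1)-safety property, but it is not a k-safety property for any k ≤ ⌊2^q⌋. -/

import Mathlib

/-!
For deterministic programs, `CC(M) ≤ q` says that under every low input at most `n = ⌊2^q⌋`
outputs are observable. A violation is witnessed by `n + 1` traces with a common low input and
pairwise distinct outputs, and every program containing them violates the bound as well. Fewer
traces never suffice: for the program publishing a secret drawn from `n + 1` values, any `n` of
its traces miss some secret `h₀`, and deleting `h₀` from the secret domain gives a program with
those traces and only `n` outputs.
-/

/-- A deterministic program with finite nonempty high-security input set `Hs`,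
finite nonempty low-security input set `Ls`, and behavior `f` (inputs and
outputs drawn from the fixed countable universe `ℕ`). -/
structure Prog where
  Hs : Finset ℕ
  Ls : Finset ℕ
  hH : Hs.Nonempty
  hL : Ls.Nonempty
  f : ℕ → ℕ → ℕ

/-- The set of traces `⟦M⟧ = {((h,ℓ),o) | h ∈ ℍ, ℓ ∈ 𝕃, o = M(h,ℓ)}`. -/
def Prog.traces (M : Prog) : Set ((ℕ × ℕ) × ℕ) :=
  {t | t.1.1 ∈ M.Hs ∧ t.1.2 ∈ M.Ls ∧ t.2 = M.f t.1.1 t.1.2}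

/-- The channel-capacity-based QIF of a deterministic program:
`CC(M) = max_{ℓ∈𝕃} log₂ |{o | ∃h ∈ ℍ. o = M(h,ℓ)}|`. -/
noncomputable def Prog.CC (M : Prog) : ℝ :=
  M.Ls.sup' M.hL fun ℓ => Real.logb 2 ((M.Hs.image fun h => M.f h ℓ).card)

/-- A set `P` of programs is a `k`-safety property iff whenever `M ∉ P`, there
is a set `T ⊆ ⟦M⟧` of at most `k` traces such that every program `M'` with
`T ⊆ ⟦M'⟧` satisfies `M' ∉ P`. -/
def IsKSafety (k : ℕ) (P : Prog → Prop) : Prop :=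
  ∀ M : Prog, ¬ P M →
    ∃ T ⊆ M.traces, T.ncard ≤ k ∧ ∀ M' : Prog, T ⊆ M'.traces → ¬ P M'

namespace Prog

def outputs (M : Prog) (ℓ : ℕ) : Finset ℕ :=
  M.Hs.image fun h => M.f h ℓ

theorem mk_mem_traces {M : Prog} {h ℓ o : ℕ} :
    ((h, ℓ), o) ∈ M.traces ↔ h ∈ M.Hs ∧ ℓ ∈ M.Ls ∧ o = M.f h ℓ :=
  Iff.rfl

theorem CC_le_iff (M : Prog) (q : ℝ) :
    M.CC ≤ q ↔ ∀ ℓ ∈ M.Ls, (M.outputs ℓ).card ≤ ⌊(2 : ℝ) ^ q⌋₊ := by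
  refine (Finset.sup'_le_iff _ _).trans (forall₂_congr fun ℓ _ => ?_)
  have hpos : (0 : ℝ) < (M.outputs ℓ).card := by
    exact_mod_cast (M.hH.image _).card_pos
  change Real.logb 2 ((M.outputs ℓ).card : ℝ) ≤ q ↔ _
  rw [Real.logb_le_iff_le_rpow one_lt_two hpos, Nat.le_floor_iff (by positivity)]

def OutputsBoundedBy (n : ℕ) (M : Prog) : Prop :=
  ∀ ℓ ∈ M.Ls, (M.outputs ℓ).card ≤ n

end Prog

theorem IsKSafety.mono {k k' : ℕ} {P : Prog → Prop} (hk : k ≤ k') (hP : IsKSafety k P) :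
    IsKSafety k' P := fun M hM =>
  let ⟨T, hT, hcard, hkill⟩ := hP M hM
  ⟨T, hT, hcard.trans hk, hkill⟩

theorem isKSafety_outputsBoundedBy_succ (n : ℕ) : IsKSafety (n + 1) (Prog.OutputsBoundedBy n) := by
  classical
  intro M hM
  simp only [Prog.OutputsBoundedBy, not_forall, not_le, exists_prop] at hM
  obtain ⟨ℓ, hℓ, hcard⟩ := hM
  obtain ⟨O, hO, hOcard⟩ := Finset.exists_subset_card_eq (show n + 1 ≤ _ from hcard)
  -- one secret per output keeps the witness down to `n + 1` traces
  obtain ⟨u, huHs, huinj, huO⟩ :=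
    Finset.exists_subset_injOn_image_eq_of_surjOn (f := fun h => M.f h ℓ) M.Hs O
      fun o ho => by simpa [Prog.outputs] using hO ho
  have hucard : u.card = n + 1 := by rw [← hOcard, ← huO, Finset.card_image_of_injOn huinj]
  refine ⟨↑(u.image fun h => ((h, ℓ), M.f h ℓ)), ?_, ?_, fun M' hT => ?_⟩
  · simp only [Finset.coe_image, Set.image_subset_iff]
    exact fun h hh => ⟨huHs hh, hℓ, rfl⟩
  · rw [Set.ncard_coe_finset, ← hucard]
    exact Finset.card_image_le
  · have hagree : ∀ h ∈ u, h ∈ M'.Hs ∧ ℓ ∈ M'.Ls ∧ M.f h ℓ = M'.f h ℓ := fun h hh =>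
      hT (Finset.mem_coe.2 (Finset.mem_image_of_mem _ hh))
    obtain ⟨h₀, hh₀⟩ : u.Nonempty := Finset.card_pos.1 (by omega)
    have hsub : O ⊆ M'.outputs ℓ := by
      rw [← huO]
      intro o ho
      obtain ⟨h, hh, rfl⟩ := Finset.mem_image.1 ho
      exact Finset.mem_image.2 ⟨h, (hagree h hh).1, ((hagree h hh).2.2).symm⟩
    intro hbound
    have := (Finset.card_le_card hsub).trans (hbound ℓ (hagree h₀ hh₀).2.1)
    omega

namespace Prog

def echo (s : Finset ℕ) (hs : s.Nonempty) : Prog :=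
  ⟨s, {0}, hs, Finset.singleton_nonempty 0, fun h _ => h⟩

variable {s : Finset ℕ} {hs : s.Nonempty}

theorem echo_traces : (echo s hs).traces = (fun h => ((h, 0), h)) '' s := by
  ext ⟨⟨h, ℓ⟩, o⟩
  simp only [mk_mem_traces, echo, Finset.mem_singleton, Set.mem_image, Finset.mem_coe,
    Prod.mk.injEq]
  constructor
  · rintro ⟨hh, rfl, rfl⟩
    exact ⟨_, hh, ⟨rfl, rfl⟩, rfl⟩
  · rintro ⟨h, hh, ⟨rfl, rfl⟩, rfl⟩
    exact ⟨hh, rfl, rfl⟩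

theorem outputsBoundedBy_echo {n : ℕ} : OutputsBoundedBy n (echo s hs) ↔ s.card ≤ n := by
  simp [OutputsBoundedBy, outputs, echo]

theorem exists_trace_notMem_of_ncard_lt {T : Set ((ℕ × ℕ) × ℕ)} (hT : T ⊆ (echo s hs).traces)
    (hcard : T.ncard < s.card) : ∃ h ∈ s, ((h, 0), h) ∉ T := by
  by_contra! hall
  have hinj : Function.Injective fun h : ℕ => ((h, 0), h) := fun a b hab => congrArg Prod.snd hab
  have hfin : T.Finite := ((s : Set ℕ).toFinite.image _).subset (echo_traces ▸ hT)
  have := Set.ncard_le_ncard (Set.image_subset_iff.2 hall) hfin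
  rw [Set.ncard_image_of_injective _ hinj, Set.ncard_coe_finset] at this
  omega

theorem subset_traces_echo_erase {T : Set ((ℕ × ℕ) × ℕ)} {h₀ : ℕ} (hT : T ⊆ (echo s hs).traces)
    (hh₀ : ((h₀, 0), h₀) ∉ T) (hs' : (s.erase h₀).Nonempty) :
    T ⊆ (echo (s.erase h₀) hs').traces := by
  intro t ht
  obtain ⟨h, hh, rfl⟩ := echo_traces ▸ hT ht
  rw [echo_traces]
  exact ⟨h, Finset.mem_erase.2 ⟨fun he => hh₀ (he ▸ ht), hh⟩, rfl⟩

end Prog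

theorem not_isKSafety_outputsBoundedBy {n : ℕ} (hn : 1 ≤ n) :
    ¬ IsKSafety n (Prog.OutputsBoundedBy n) := by
  intro hsafe
  have hrange : (Finset.range (n + 1)).Nonempty := Finset.nonempty_range_add_one
  obtain ⟨T, hT, hTcard, hkill⟩ :=
    hsafe (Prog.echo _ hrange) (by simp [Prog.outputsBoundedBy_echo])
  obtain ⟨h₀, hh₀, hh₀T⟩ :=
    Prog.exists_trace_notMem_of_ncard_lt hT (by rw [Finset.card_range]; omega)
  have hcard : ((Finset.range (n + 1)).erase h₀).card = n := by
    rw [Finset.card_erase_of_mem hh₀, Finset.card_range, Nat.add_sub_cancel]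
  have hne : ((Finset.range (n + 1)).erase h₀).Nonempty := Finset.card_pos.1 (by omega)
  exact hkill _ (Prog.subset_traces_echo_erase hT hh₀T hne)
    (Prog.outputsBoundedBy_echo.2 hcard.le)

theorem B_CC_ksafety (q : ℝ) (hq : 0 < q) :
    IsKSafety (⌊(2 : ℝ) ^ q⌋₊ + 1) (fun M => M.CC ≤ q) ∧
      ∀ k : ℕ, k ≤ ⌊(2 : ℝ) ^ q⌋₊ → ¬ IsKSafety k (fun M => M.CC ≤ q) := by
  have hP : (fun M : Prog => M.CC ≤ q) = Prog.OutputsBoundedBy ⌊(2 : ℝ) ^ q⌋₊ :=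
    funext fun M => propext (M.CC_le_iff q)
  have hn : 1 ≤ ⌊(2 : ℝ) ^ q⌋₊ := Nat.le_floor (by simpa using Real.one_le_rpow one_le_two hq.le)
  rw [hP]
  exact ⟨isKSafety_outputsBoundedBy_succ _,
    fun k hk hsafe => not_isKSafety_outputsBoundedBy hn (hsafe.mono hk)⟩
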